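/- (Theorem on the long regression under strong exogeneity.) Let Assumption 2 hold, assume positivity, and assume the covariance matrix of (D,A) is positive definite. Then Δ_long = Δ_dce^l + Δ_ind^l, where Δ_dce^l = Σ_{a∈𝒜} ω_dce^l(a)·(μ(1,a) − μ(0,a)) and Δ_ind^l = Σ_{a∈𝒜} ω_ind^l(a)·(μ(0,a) − μ(0,0)), and the weights satisfy Σ_{a∈𝒜} ω_dce^l(a) = 1 and Σ_{a∈𝒜} ω_ind^l(a) = 0. -/

import Mathlib

open MeasureTheory ProbabilityTheory BigOperators

noncomputable section

variable {Ω : Type} [MeasurableSpace Ω] {K : ℕ}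

/-- Expectation of a real-valued random variable. -/
def Exp (P : Measure Ω) (Z : Ω → ℝ) : ℝ := ∫ ω, Z ω ∂P

/-- Probability of an event, as a real number. -/
def Pr (P : Measure Ω) (s : Set Ω) : ℝ := (P s).toReal

/-- Conditional expectation given an event, defined as a ratio. -/
def CE (P : Measure Ω) (Z : Ω → ℝ) (s : Set Ω) : ℝ :=
  Exp P (fun ω => Z ω * s.indicator (fun _ => (1:ℝ)) ω) / Pr P s

/-- Covariance of two real-valued random variables. -/
def Cov (P : Measure Ω) (Z W : Ω → ℝ) : ℝ :=
  Exp P (fun ω => Z ω * W ω) - Exp P Z * Exp P W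

/-- The event {D = d, A = a}. -/
def evDA (D : Ω → ℕ) (A : Ω → Fin K → ℕ) (d : ℕ) (a : Fin K → ℕ) : Set Ω :=
  {ω | D ω = d ∧ A ω = a}

/-- The event {D = d}. -/
def evD (D : Ω → ℕ) (d : ℕ) : Set Ω := {ω | D ω = d}

/-- The event {A = a}. -/
def evA (A : Ω → Fin K → ℕ) (a : Fin K → ℕ) : Set Ω := {ω | A ω = a}

/-- π_d(a) = P(A = a | D = d). -/
def piP (P : Measure Ω) (D : Ω → ℕ) (A : Ω → Fin K → ℕ) (d : ℕ) (a : Fin K → ℕ) : ℝ :=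
  Pr P (evDA D A d a) / Pr P (evD D d)

/-- The observed outcome Y = Σ_{(d,a)} Y(d,a)·1{D=d, A=a}. -/
def Yobs (D : Ω → ℕ) (A : Ω → Fin K → ℕ) (𝒜 : Finset (Fin K → ℕ))
    (Ypot : ℕ → (Fin K → ℕ) → Ω → ℝ) : Ω → ℝ :=
  fun ω => ∑ d ∈ ({0, 1} : Finset ℕ), ∑ a ∈ 𝒜,
    Ypot d a ω * (if D ω = d ∧ A ω = a then (1:ℝ) else 0)

/-- μ(d,a) = E[Y(d,a)]. -/
def muP (P : Measure Ω) (Ypot : ℕ → (Fin K → ℕ) → Ω → ℝ) (d : ℕ) (a : Fin K → ℕ) : ℝ :=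
  Exp P (Ypot d a)

/-- The random vector (D, A) as a real-valued family indexed by Unit ⊕ Fin K. -/
def DAvec (D : Ω → ℕ) (A : Ω → Fin K → ℕ) : Unit ⊕ Fin K → Ω → ℝ :=
  Sum.elim (fun _ ω => (D ω : ℝ)) (fun j ω => (A ω j : ℝ))

/-- The (K+1)×(K+1) covariance matrix of (D, A). -/
def covDAmat (P : Measure Ω) (D : Ω → ℕ) (A : Ω → Fin K → ℕ) :
    Matrix (Unit ⊕ Fin K) (Unit ⊕ Fin K) ℝ :=
  Matrix.of fun i j => Cov P (DAvec D A i) (DAvec D A j)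

/-- The K×K covariance matrix Var(A). -/
def varAmat (P : Measure Ω) (A : Ω → Fin K → ℕ) : Matrix (Fin K) (Fin K) ℝ :=
  Matrix.of fun i j => Cov P (fun ω => (A ω i : ℝ)) (fun ω => (A ω j : ℝ))

/-- The row vector Cov(D, A). -/
def covDA (P : Measure Ω) (D : Ω → ℕ) (A : Ω → Fin K → ℕ) : Fin K → ℝ :=
  fun j => Cov P (fun ω => (D ω : ℝ)) (fun ω => (A ω j : ℝ))

/-- M = Cov(D,A) ⬝ Var(A)⁻¹. -/
def Mlong (P : Measure Ω) (D : Ω → ℕ) (A : Ω → Fin K → ℕ) : Fin K → ℝ :=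
  fun j => ∑ i, covDA P D A i * (varAmat P A)⁻¹ i j

/-- Var(D). -/
def varD (P : Measure Ω) (D : Ω → ℕ) : ℝ :=
  Cov P (fun ω => (D ω : ℝ)) (fun ω => (D ω : ℝ))

/-- denom = Var(D) − Cov(D,A)·Var(A)⁻¹·Cov(A,D). -/
def denomL (P : Measure Ω) (D : Ω → ℕ) (A : Ω → Fin K → ℕ) : ℝ :=
  varD P D - ∑ j, Mlong P D A j * covDA P D A j

/-- The long-regression weight ω_dce^l(a). -/
def wdceL (P : Measure Ω) (D : Ω → ℕ) (A : Ω → Fin K → ℕ) (a : Fin K → ℕ) : ℝ :=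
  piP P D A 1 a *
    (varD P D - Pr P (evD D 1) *
      ∑ j, Mlong P D A j * ((a j : ℝ) - Exp P (fun ω => (A ω j : ℝ)))) / denomL P D A

/-- The long-regression weight ω_ind^l(a). -/
def windL (P : Measure Ω) (D : Ω → ℕ) (A : Ω → Fin K → ℕ) (a : Fin K → ℕ) : ℝ :=
  (varD P D * (piP P D A 1 a - piP P D A 0 a) -
    Pr P (evA A a) * ∑ j, Mlong P D A j * ((a j : ℝ) - Exp P (fun ω => (A ω j : ℝ))))
  / denomL P D A

/-- The residual of the long regression of Y on (1, D, A). -/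
def residLong (D : Ω → ℕ) (A : Ω → Fin K → ℕ) (𝒜 : Finset (Fin K → ℕ))
    (Ypot : ℕ → (Fin K → ℕ) → Ω → ℝ) (Δ θ₀ : ℝ) (θ : Fin K → ℝ) : Ω → ℝ :=
  fun ω => Yobs D A 𝒜 Ypot ω - Δ * (D ω : ℝ) - θ₀ - ∑ j, θ j * (A ω j : ℝ)

/-- The random vector W = (A, A·D) as a real-valued family indexed by Fin K ⊕ Fin K. -/
def Wvec (D : Ω → ℕ) (A : Ω → Fin K → ℕ) : Fin K ⊕ Fin K → Ω → ℝ :=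
  Sum.elim (fun j ω => (A ω j : ℝ)) (fun j ω => (A ω j : ℝ) * (D ω : ℝ))

/-- The 2K×2K covariance matrix Var(W), W = (A, AD). -/
def varWmat (P : Measure Ω) (D : Ω → ℕ) (A : Ω → Fin K → ℕ) :
    Matrix (Fin K ⊕ Fin K) (Fin K ⊕ Fin K) ℝ :=
  Matrix.of fun u v => Cov P (Wvec D A u) (Wvec D A v)

/-- The row vector Cov(D, W). -/
def covDW (P : Measure Ω) (D : Ω → ℕ) (A : Ω → Fin K → ℕ) : Fin K ⊕ Fin K → ℝ :=
  fun u => Cov P (fun ω => (D ω : ℝ)) (Wvec D A u)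

/-- M = Cov(D,W) ⬝ Var(W)⁻¹ for the interaction regression. -/
def Minter (P : Measure Ω) (D : Ω → ℕ) (A : Ω → Fin K → ℕ) : Fin K ⊕ Fin K → ℝ :=
  fun v => ∑ u, covDW P D A u * (varWmat P D A)⁻¹ u v

/-- denom = Var(D) − M·Cov(W,D) for the interaction regression. -/
def denomI (P : Measure Ω) (D : Ω → ℕ) (A : Ω → Fin K → ℕ) : ℝ :=
  varD P D - ∑ v, Minter P D A v * covDW P D A v

/-- E[A_j | D = 1]. -/
def condA1 (P : Measure Ω) (D : Ω → ℕ) (A : Ω → Fin K → ℕ) (j : Fin K) : ℝ :=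
  CE P (fun ω => (A ω j : ℝ)) (evD D 1)

/-- The random vector (D, A, AD) as a real-valued family. -/
def DADvec (D : Ω → ℕ) (A : Ω → Fin K → ℕ) : Unit ⊕ (Fin K ⊕ Fin K) → Ω → ℝ :=
  Sum.elim (fun _ ω => (D ω : ℝ)) (Wvec D A)

/-- The (2K+1)×(2K+1) covariance matrix of (D, A, AD). -/
def covDADmat (P : Measure Ω) (D : Ω → ℕ) (A : Ω → Fin K → ℕ) :
    Matrix (Unit ⊕ (Fin K ⊕ Fin K)) (Unit ⊕ (Fin K ⊕ Fin K)) ℝ :=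
  Matrix.of fun i j => Cov P (DADvec D A i) (DADvec D A j)

/-- The interaction-regression weight ω_dce^i(a). -/
def wdceI (P : Measure Ω) (D : Ω → ℕ) (A : Ω → Fin K → ℕ) (a : Fin K → ℕ) : ℝ :=
  piP P D A 1 a *
    (varD P D
      - Pr P (evD D 1) *
          ∑ j, Minter P D A (Sum.inl j) * ((a j : ℝ) - Exp P (fun ω => (A ω j : ℝ)))
      - Pr P (evD D 1) *
          ∑ j, Minter P D A (Sum.inr j) * ((a j : ℝ) - Pr P (evD D 1) * condA1 P D A j))
  / denomI P D A

/-- The interaction-regression weight ω_ind^i(a). -/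
def windI (P : Measure Ω) (D : Ω → ℕ) (A : Ω → Fin K → ℕ) (a : Fin K → ℕ) : ℝ :=
  (varD P D * (piP P D A 1 a - piP P D A 0 a)
    - ∑ j, Minter P D A (Sum.inl j) * Pr P (evA A a) * ((a j : ℝ) - Exp P (fun ω => (A ω j : ℝ)))
    - Pr P (evD D 1) *
        ∑ j, Minter P D A (Sum.inr j) *
          (piP P D A 1 a * (a j : ℝ) - Pr P (evA A a) * condA1 P D A j))
  / denomI P D A

/-- The residual of the interaction regression of Y on (1, D, A, AD). -/
def residInter (D : Ω → ℕ) (A : Ω → Fin K → ℕ) (𝒜 : Finset (Fin K → ℕ))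
    (Ypot : ℕ → (Fin K → ℕ) → Ω → ℝ) (Δ θ₀ : ℝ) (θ lam : Fin K → ℝ) : Ω → ℝ :=
  fun ω => Yobs D A 𝒜 Ypot ω - Δ * (D ω : ℝ) - θ₀ - (∑ j, θ j * (A ω j : ℝ))
    - ∑ j, lam j * (A ω j : ℝ) * (D ω : ℝ)

/-- P(D = d | A = a). -/
def condDgivenA (P : Measure Ω) (D : Ω → ℕ) (A : Ω → Fin K → ℕ) (d : ℕ) (a : Fin K → ℕ) : ℝ :=
  Pr P (evDA D A d a) / Pr P (evA A a)

/-- The SFE weight ω_sfe(a). -/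
def wsfe (P : Measure Ω) (D : Ω → ℕ) (A : Ω → Fin K → ℕ) (𝒜 : Finset (Fin K → ℕ))
    (a : Fin K → ℕ) : ℝ :=
  condDgivenA P D A 1 a * condDgivenA P D A 0 a * Pr P (evA A a) /
    ∑ a' ∈ 𝒜, condDgivenA P D A 1 a' * condDgivenA P D A 0 a' * Pr P (evA A a')

/-- The residual of the SFE regression of Y on (D, {1{A=a}}). -/
def residSFE (D : Ω → ℕ) (A : Ω → Fin K → ℕ) (𝒜 : Finset (Fin K → ℕ))
    (Ypot : ℕ → (Fin K → ℕ) → Ω → ℝ) (Δ : ℝ) (θ : (Fin K → ℕ) → ℝ) : Ω → ℝ :=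
  fun ω => Yobs D A 𝒜 Ypot ω - Δ * (D ω : ℝ) -
    ∑ a ∈ 𝒜, θ a * (if A ω = a then (1:ℝ) else 0)

/-- The residual of the saturated regression of Y on ({1{A=a}}, {D·1{A=a}}). -/
def residSAT (D : Ω → ℕ) (A : Ω → Fin K → ℕ) (𝒜 : Finset (Fin K → ℕ))
    (Ypot : ℕ → (Fin K → ℕ) → Ω → ℝ) (γ Δsat : (Fin K → ℕ) → ℝ) : Ω → ℝ :=
  fun ω => Yobs D A 𝒜 Ypot ω - (∑ a ∈ 𝒜, γ a * (if A ω = a then (1:ℝ) else 0)) -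
    ∑ a ∈ 𝒜, Δsat a * (D ω : ℝ) * (if A ω = a then (1:ℝ) else 0)

/-
Under strong exogeneity, every moment `E[Y·h(D,A)]` equals `∑ μ(d,a) h(d,a) P(D=d, A=a)`, so the
normal equations of the long regression become identities for the finitely supported law of
`(D, A)`. By Frisch–Waugh–Lovell, `Δ_long · denom = ∑ μ(d,a) r(d,a) P(D=d, A=a)`, where
`r(d,a) = d - p - M (a - E[A])` is the residual of `D` after partialling out `A`. Since
`Var(D) = p(1-p)`, the weights are `ω_dce(a) = r(1,a) P(D=1, A=a) / denom` and
`ω_ind(a) = ∑_d r(d,a) P(D=d, A=a) / denom`; as `E[r] = 0` and `E[D r] = denom`, they sum to `1`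
and `0`, and regrouping `∑ μ r P` by `a` gives the decomposition.
-/

section FiniteSupport

variable {Ω α : Type*} [MeasurableSpace Ω] [MeasurableSpace α] [MeasurableSingletonClass α]
  {P : Measure Ω} {X : Ω → α} {S : Finset α}

theorem integral_comp_eq_sum_setIntegral (hX : Measurable X) (hS : ∀ ω, X ω ∈ S)
    (F : α → Ω → ℝ) (hF : ∀ x ∈ S, Integrable (F x) P) :
    ∫ ω, F (X ω) ω ∂P = ∑ x ∈ S, ∫ ω in X ⁻¹' {x}, F x ω ∂P := by
  have hfib : ∀ x, MeasurableSet (X ⁻¹' {x}) := fun x => hX (measurableSet_singleton x)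
  have hsplit : ∀ ω, F (X ω) ω = ∑ x ∈ S, (X ⁻¹' {x}).indicator (F x) ω := fun ω => by
    rw [Finset.sum_eq_single_of_mem (X ω) (hS ω) fun x _ hx => by simp [Ne.symm hx]]
    simp
  simp_rw [hsplit]
  rw [integral_finsetSum _ fun x hx => (hF x hx).indicator (hfib x)]
  exact Finset.sum_congr rfl fun x _ => integral_indicator (hfib x)

theorem setIntegral_preimage_singleton_of_indepFun (hX : Measurable X) {Y : Ω → ℝ}
    (hY : AEMeasurable Y P) (hXY : IndepFun X Y P) (x : α) :
    ∫ ω in X ⁻¹' {x}, Y ω ∂P = P.real (X ⁻¹' {x}) * ∫ ω, Y ω ∂P :=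
  Indep.setIntegral_eq_mul (f := id) hX.comap_le ((IndepFun_iff_Indep X Y P).1 hXY) hY
    ⟨{x}, measurableSet_singleton x, rfl⟩ aestronglyMeasurable_id

variable [IsFiniteMeasure P]

theorem integral_comp_eq_sum (hX : Measurable X) (hS : ∀ ω, X ω ∈ S) (g : α → ℝ) :
    ∫ ω, g (X ω) ∂P = ∑ x ∈ S, g x * P.real (X ⁻¹' {x}) := by
  rw [integral_comp_eq_sum_setIntegral hX hS (fun x _ => g x) fun x _ => integrable_const _]
  simp [mul_comm]

theorem integral_sub_mul_comp_eq_sum_of_indepFun (hX : Measurable X) (hS : ∀ ω, X ω ∈ S)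
    {Y : α → Ω → ℝ} (hY : ∀ x ∈ S, Integrable (Y x) P) (hXY : ∀ x ∈ S, IndepFun X (Y x) P)
    (f h : α → ℝ) :
    ∫ ω, (Y (X ω) ω - f (X ω)) * h (X ω) ∂P
      = ∑ x ∈ S, ((∫ ω, Y x ω ∂P) - f x) * h x * P.real (X ⁻¹' {x}) := by
  rw [integral_comp_eq_sum_setIntegral hX hS (fun x ω => (Y x ω - f x) * h x)
    fun x hx => ((hY x hx).sub (integrable_const _)).mul_const _]
  refine Finset.sum_congr rfl fun x hx => ?_
  rw [integral_mul_const, integral_sub (hY x hx).integrableOn (integrable_const _),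
    setIntegral_preimage_singleton_of_indepFun hX (hY x hx).aemeasurable (hXY x hx),
    setIntegral_const, smul_eq_mul]
  ring

end FiniteSupport

section WeightedMoments

variable {α : Type*} (S : Finset α) (ν : α → ℝ)

def wmean (g : α → ℝ) : ℝ := ∑ x ∈ S, g x * ν x

def wcov (g h : α → ℝ) : ℝ := wmean S ν (fun x => g x * h x) - wmean S ν g * wmean S ν h

theorem wcov_comm (g h : α → ℝ) : wcov S ν g h = wcov S ν h g := by
  simp only [wcov, mul_comm]

theorem wmean_sub (f g : α → ℝ) : wmean S ν (fun x => f x - g x) = wmean S ν f - wmean S ν g := by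
  simp only [wmean, sub_mul, Finset.sum_sub_distrib]

theorem wmean_mul_const (f : α → ℝ) (c : ℝ) : wmean S ν (fun x => f x * c) = wmean S ν f * c := by
  simp only [wmean, Finset.sum_mul]; exact Finset.sum_congr rfl fun _ _ => by ring

theorem wmean_const_mul (c : ℝ) (f : α → ℝ) : wmean S ν (fun x => c * f x) = c * wmean S ν f := by
  simp only [wmean, Finset.mul_sum]; exact Finset.sum_congr rfl fun _ _ => by ring

theorem wmean_sum {ι : Type*} (s : Finset ι) (f : ι → α → ℝ) :
    wmean S ν (fun x => ∑ j ∈ s, f j x) = ∑ j ∈ s, wmean S ν (f j) := by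
  simp only [wmean, Finset.sum_mul]; exact Finset.sum_comm

variable {ι : Type*} [Fintype ι]

def partialOut (t : α → ℝ) (k : ι → α → ℝ) (M : ι → ℝ) (x : α) : ℝ :=
  t x - wmean S ν t - ∑ j, M j * (k j x - wmean S ν (k j))

theorem wmean_mul_partialOut (g t : α → ℝ) (k : ι → α → ℝ) (M : ι → ℝ) :
    wmean S ν (fun x => g x * partialOut S ν t k M x)
      = wcov S ν g t - ∑ j, M j * wcov S ν g (k j) := by
  have hexpand : ∀ x, g x * partialOut S ν t k M x = g x * t x - g x * wmean S ν t
      - ∑ j, (M j * (g x * k j x) - M j * (g x * wmean S ν (k j))) := fun x => by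
    simp only [partialOut, mul_sub, Finset.mul_sum]
    congr 1
    exact Finset.sum_congr rfl fun _ _ => by ring
  simp only [hexpand, wmean_sub, wmean_sum, wmean_mul_const, wmean_const_mul, wcov, mul_sub]

theorem wmean_const (hν : ∑ x ∈ S, ν x = 1) (c : ℝ) : wmean S ν (fun _ => c) = c := by
  rw [wmean, ← Finset.mul_sum, hν, mul_one]

theorem wcov_const_left (hν : ∑ x ∈ S, ν x = 1) (c : ℝ) (h : α → ℝ) :
    wcov S ν (fun _ => c) h = 0 := by
  rw [wcov, wmean_const_mul, wmean_const S ν hν, sub_self]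

theorem wcov_affine_left (hν : ∑ x ∈ S, ν x = 1) (y t h : α → ℝ) (k : ι → α → ℝ) (Δ θ₀ : ℝ)
    (θ : ι → ℝ) :
    wcov S ν (fun x => y x - Δ * t x - θ₀ - ∑ j, θ j * k j x) h
      = wcov S ν y h - Δ * wcov S ν t h - ∑ j, θ j * wcov S ν (k j) h := by
  simp only [wcov, sub_mul, Finset.sum_mul, mul_assoc, wmean_sub, wmean_sum, wmean_const_mul,
    wmean_const S ν hν, mul_sub, Finset.sum_sub_distrib]
  ring

-- Frisch–Waugh–Lovell: `Δ` is the slope of `y` on `t` with the controls `k` partialled out.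
theorem wmean_mul_partialOut_of_orthogonal (hν : ∑ x ∈ S, ν x = 1) (y t : α → ℝ)
    (k : ι → α → ℝ) (M : ι → ℝ) (hM : ∀ l, ∑ j, M j * wcov S ν (k j) (k l) = wcov S ν t (k l))
    (Δ θ₀ : ℝ) (θ : ι → ℝ)
    (h1 : wmean S ν (fun x => y x - Δ * t x - θ₀ - ∑ j, θ j * k j x) = 0)
    (h2 : wmean S ν (fun x => (y x - Δ * t x - θ₀ - ∑ j, θ j * k j x) * t x) = 0)
    (h3 : ∀ l, wmean S ν (fun x => (y x - Δ * t x - θ₀ - ∑ j, θ j * k j x) * k l x) = 0) :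
    wmean S ν (fun x => y x * partialOut S ν t k M x)
      = Δ * (wcov S ν t t - ∑ j, M j * wcov S ν t (k j)) := by
  have hy : ∀ h, (wmean S ν fun x => (y x - Δ * t x - θ₀ - ∑ j, θ j * k j x) * h x) = 0 →
      wcov S ν y h = Δ * wcov S ν t h + ∑ j, θ j * wcov S ν (k j) h := fun h hh => by
    have := wcov_affine_left S ν hν y t h k Δ θ₀ θ
    rw [wcov, hh, h1, zero_mul, sub_zero] at this
    linarith
  have hk : ∀ j, ∑ l, M l * wcov S ν (k j) (k l) = wcov S ν (k j) t := fun j => by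
    simp only [wcov_comm S ν (k j)]; exact hM j
  have hθ : ∑ l, M l * ∑ j, θ j * wcov S ν (k j) (k l) = ∑ j, θ j * wcov S ν (k j) t := by
    simp_rw [Finset.mul_sum, mul_left_comm (M _)]
    rw [Finset.sum_comm]
    simp_rw [← Finset.mul_sum, hk]
  rw [wmean_mul_partialOut, hy t h2]
  simp only [hy _ (h3 _), mul_add, Finset.sum_add_distrib, hθ, mul_left_comm (M _) Δ,
    ← Finset.mul_sum]
  ring

end WeightedMoments

section Covariance

open Matrix

variable {P : Measure Ω} {D : Ω → ℕ} {A : Ω → Fin K → ℕ}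

theorem Cov_comm (Z W : Ω → ℝ) : Cov P Z W = Cov P W Z := by
  simp only [Cov, mul_comm]

theorem varAmat_posDef (hPD : (covDAmat P D A).PosDef) : (varAmat P A).PosDef :=
  hPD.submatrix Sum.inr_injective

theorem Mlong_mul_varAmat (hPD : (covDAmat P D A).PosDef) (l : Fin K) :
    ∑ j, Mlong P D A j * varAmat P A j l = covDA P D A l := by
  have hdet : IsUnit (varAmat P A).det := (varAmat_posDef hPD).det_pos.ne'.isUnit
  have h : vecMul (vecMul (covDA P D A) (varAmat P A)⁻¹) (varAmat P A) = covDA P D A := by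
    rw [vecMul_vecMul, nonsing_inv_mul _ hdet, vecMul_one]
  exact congrFun h l

theorem covDAmat_eq_fromBlocks :
    covDAmat P D A = fromBlocks (of fun _ _ => varD P D) (of fun _ j => covDA P D A j)
      (of fun i _ => covDA P D A i) (varAmat P A) := by
  ext (_ | i) (_ | j) <;> simp [covDAmat, DAvec, varD, covDA, varAmat]
  exact Cov_comm _ _

-- `denomL` is the Schur complement of `Var(A)`, so `det Cov(D, A) = det Var(A) * denomL`.
theorem denomL_pos (hPD : (covDAmat P D A).PosDef) : 0 < denomL P D A := by
  have hV := varAmat_posDef hPD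
  have := hV.isUnit.invertible
  have hdet := hPD.det_pos
  rw [covDAmat_eq_fromBlocks, det_fromBlocks₂₂, det_unique (n := Unit), invOf_eq_nonsing_inv]
    at hdet
  refine pos_of_mul_pos_right hdet hV.det_pos.le |>.trans_eq ?_
  simp [denomL, Mlong, Matrix.mul_apply, Finset.sum_mul]

end Covariance

section Model

variable {Ω : Type}

def supportDA (𝒜 : Finset (Fin K → ℕ)) : Finset (ℕ × (Fin K → ℕ)) := ({0, 1} : Finset ℕ) ×ˢ 𝒜

theorem wmean_supportDA (ν : ℕ × (Fin K → ℕ) → ℝ) (𝒜 : Finset (Fin K → ℕ))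
    (g : ℕ × (Fin K → ℕ) → ℝ) :
    wmean (supportDA 𝒜) ν g = ∑ a ∈ 𝒜, (g (0, a) * ν (0, a) + g (1, a) * ν (1, a)) := by
  rw [wmean, supportDA, Finset.sum_product_right]
  exact Finset.sum_congr rfl fun a _ => Finset.sum_pair zero_ne_one

theorem dce_ind_decomposition {𝒜 : Finset (Fin K → ℕ)} {ν r y : ℕ × (Fin K → ℕ) → ℝ}
    {den Δ : ℝ} (hden : den ≠ 0)
    (ht : wmean (supportDA 𝒜) ν (fun x => (x.1 : ℝ) * r x) = den)
    (h1 : wmean (supportDA 𝒜) ν (fun x => 1 * r x) = 0)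
    (hy : wmean (supportDA 𝒜) ν (fun x => y x * r x) = Δ * den) (c : ℝ) :
    Δ = (∑ a ∈ 𝒜, ν (1, a) * r (1, a) / den * (y (1, a) - y (0, a)))
        + ∑ a ∈ 𝒜, (ν (0, a) * r (0, a) + ν (1, a) * r (1, a)) / den * (y (0, a) - c)
    ∧ ∑ a ∈ 𝒜, ν (1, a) * r (1, a) / den = 1
    ∧ ∑ a ∈ 𝒜, (ν (0, a) * r (0, a) + ν (1, a) * r (1, a)) / den = 0 := by
  simp only [wmean_supportDA, Nat.cast_zero, Nat.cast_one, zero_mul, one_mul, zero_add] at ht h1 hy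
  have key : ∑ a ∈ 𝒜, (ν (1, a) * r (1, a) * (y (1, a) - y (0, a))
      + (ν (0, a) * r (0, a) + ν (1, a) * r (1, a)) * (y (0, a) - c)) = Δ * den := by
    rw [← sub_zero (Δ * den), ← mul_zero c, ← hy, ← h1, Finset.mul_sum, ← Finset.sum_sub_distrib]
    exact Finset.sum_congr rfl fun a _ => by ring
  refine ⟨?_, ?_, ?_⟩
  · simp only [div_mul_eq_mul_div, ← Finset.sum_div, ← add_div, ← Finset.sum_add_distrib, key]
    field_simp
  · rw [← Finset.sum_div, div_eq_one_iff_eq hden, ← ht]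
    exact Finset.sum_congr rfl fun _ _ => mul_comm _ _
  · have h1' : ∑ a ∈ 𝒜, (ν (0, a) * r (0, a) + ν (1, a) * r (1, a)) = 0 := by
      rw [← h1]; exact Finset.sum_congr rfl fun _ _ => by ring
    rw [← Finset.sum_div, h1', zero_div]

theorem evDA_eq_preimage (D : Ω → ℕ) (A : Ω → Fin K → ℕ) (d : ℕ) (a : Fin K → ℕ) :
    evDA D A d a = (fun ω => (D ω, A ω)) ⁻¹' {(d, a)} := by
  ext ω; simp [evDA]

theorem mem_supportDA {D : Ω → ℕ} {A : Ω → Fin K → ℕ} {𝒜 : Finset (Fin K → ℕ)}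
    (hDbin : ∀ ω, D ω = 0 ∨ D ω = 1) (hAsupp : ∀ ω, A ω ∈ 𝒜) (ω : Ω) :
    (D ω, A ω) ∈ supportDA 𝒜 := by
  simpa [supportDA, hAsupp ω] using hDbin ω

theorem Yobs_eq {D : Ω → ℕ} {A : Ω → Fin K → ℕ} {𝒜 : Finset (Fin K → ℕ)}
    (hDbin : ∀ ω, D ω = 0 ∨ D ω = 1) (hAsupp : ∀ ω, A ω ∈ 𝒜)
    (Ypot : ℕ → (Fin K → ℕ) → Ω → ℝ) (ω : Ω) :
    Yobs D A 𝒜 Ypot ω = Ypot (D ω) (A ω) ω := by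
  rw [Yobs,
    ← Finset.sum_product' (f := fun d a => Ypot d a ω * if D ω = d ∧ A ω = a then 1 else 0)]
  change ∑ x ∈ supportDA 𝒜, _ = _
  rw [Finset.sum_eq_single_of_mem (D ω, A ω) (mem_supportDA hDbin hAsupp ω)]
  · simp
  · rintro ⟨d, a⟩ _ hne
    rw [if_neg (by rintro ⟨rfl, rfl⟩; exact hne rfl), mul_zero]

variable [MeasurableSpace Ω]

def pmfDA (P : Measure Ω) (D : Ω → ℕ) (A : Ω → Fin K → ℕ) (x : ℕ × (Fin K → ℕ)) : ℝ :=
  Pr P (evDA D A x.1 x.2)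

variable {P : Measure Ω} [IsProbabilityMeasure P] {D : Ω → ℕ} {A : Ω → Fin K → ℕ}
  {𝒜 : Finset (Fin K → ℕ)}

theorem measurableSet_evDA (hD : Measurable D) (hA : Measurable A) (d : ℕ) (a : Fin K → ℕ) :
    MeasurableSet (evDA D A d a) := by
  rw [evDA_eq_preimage]
  exact hD.prodMk hA (measurableSet_singleton _)

theorem exp_comp_eq_wmean (hD : Measurable D) (hA : Measurable A)
    (hDbin : ∀ ω, D ω = 0 ∨ D ω = 1) (hAsupp : ∀ ω, A ω ∈ 𝒜) (g : ℕ × (Fin K → ℕ) → ℝ) :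
    Exp P (fun ω => g (D ω, A ω)) = wmean (supportDA 𝒜) (pmfDA P D A) g := by
  rw [Exp, integral_comp_eq_sum (hD.prodMk hA) (mem_supportDA hDbin hAsupp)]
  exact Finset.sum_congr rfl fun x _ => by rw [pmfDA, evDA_eq_preimage]; rfl

theorem sum_pmfDA (hD : Measurable D) (hA : Measurable A)
    (hDbin : ∀ ω, D ω = 0 ∨ D ω = 1) (hAsupp : ∀ ω, A ω ∈ 𝒜) :
    ∑ x ∈ supportDA 𝒜, pmfDA P D A x = 1 := by
  simpa [wmean, Exp] using (exp_comp_eq_wmean (P := P) hD hA hDbin hAsupp fun _ => 1).symm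

theorem cov_comp_eq_wcov (hD : Measurable D) (hA : Measurable A)
    (hDbin : ∀ ω, D ω = 0 ∨ D ω = 1) (hAsupp : ∀ ω, A ω ∈ 𝒜) (g h : ℕ × (Fin K → ℕ) → ℝ) :
    Cov P (fun ω => g (D ω, A ω)) (fun ω => h (D ω, A ω))
      = wcov (supportDA 𝒜) (pmfDA P D A) g h := by
  simp only [Cov, wcov, ← exp_comp_eq_wmean hD hA hDbin hAsupp]

theorem varD_eq_wcov (hD : Measurable D) (hA : Measurable A)
    (hDbin : ∀ ω, D ω = 0 ∨ D ω = 1) (hAsupp : ∀ ω, A ω ∈ 𝒜) :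
    varD P D = wcov (supportDA 𝒜) (pmfDA P D A) (fun x => (x.1 : ℝ)) (fun x => (x.1 : ℝ)) :=
  cov_comp_eq_wcov hD hA hDbin hAsupp (fun x => (x.1 : ℝ)) (fun x => (x.1 : ℝ))

theorem covDA_eq_wcov (hD : Measurable D) (hA : Measurable A)
    (hDbin : ∀ ω, D ω = 0 ∨ D ω = 1) (hAsupp : ∀ ω, A ω ∈ 𝒜) (j : Fin K) :
    covDA P D A j
      = wcov (supportDA 𝒜) (pmfDA P D A) (fun x => (x.1 : ℝ)) (fun x => (x.2 j : ℝ)) :=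
  cov_comp_eq_wcov hD hA hDbin hAsupp (fun x => (x.1 : ℝ)) (fun x => (x.2 j : ℝ))

theorem varAmat_eq_wcov (hD : Measurable D) (hA : Measurable A)
    (hDbin : ∀ ω, D ω = 0 ∨ D ω = 1) (hAsupp : ∀ ω, A ω ∈ 𝒜) (i j : Fin K) :
    varAmat P A i j
      = wcov (supportDA 𝒜) (pmfDA P D A) (fun x => (x.2 i : ℝ)) (fun x => (x.2 j : ℝ)) :=
  cov_comp_eq_wcov hD hA hDbin hAsupp (fun x => (x.2 i : ℝ)) (fun x => (x.2 j : ℝ))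

theorem pr_preimage_eq_wmean (hD : Measurable D) (hA : Measurable A)
    (hDbin : ∀ ω, D ω = 0 ∨ D ω = 1) (hAsupp : ∀ ω, A ω ∈ 𝒜) (s : Set (ℕ × (Fin K → ℕ))) :
    Pr P ((fun ω => (D ω, A ω)) ⁻¹' s) = wmean (supportDA 𝒜) (pmfDA P D A) (s.indicator 1) := by
  rw [Pr, ← measureReal_def,
    ← integral_indicator_one ((hD.prodMk hA) s.to_countable.measurableSet)]
  exact exp_comp_eq_wmean hD hA hDbin hAsupp (s.indicator 1)

theorem pr_evD_one_eq_wmean (hD : Measurable D) (hA : Measurable A)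
    (hDbin : ∀ ω, D ω = 0 ∨ D ω = 1) (hAsupp : ∀ ω, A ω ∈ 𝒜) :
    Pr P (evD D 1) = wmean (supportDA 𝒜) (pmfDA P D A) (fun x => (x.1 : ℝ)) := by
  rw [show evD D 1 = (fun ω => (D ω, A ω)) ⁻¹' {x | x.1 = 1} from rfl,
    pr_preimage_eq_wmean hD hA hDbin hAsupp]
  simp [wmean_supportDA, Set.indicator]

theorem pr_evD_zero (hD : Measurable D) (hA : Measurable A)
    (hDbin : ∀ ω, D ω = 0 ∨ D ω = 1) (hAsupp : ∀ ω, A ω ∈ 𝒜) :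
    Pr P (evD D 0) = 1 - Pr P (evD D 1) := by
  rw [show evD D 0 = (fun ω => (D ω, A ω)) ⁻¹' {x | x.1 = 0} from rfl,
    pr_preimage_eq_wmean hD hA hDbin hAsupp, pr_evD_one_eq_wmean hD hA hDbin hAsupp,
    ← sum_pmfDA (P := P) hD hA hDbin hAsupp]
  simp only [wmean_supportDA]
  simp [Set.indicator, supportDA, Finset.sum_product_right, Finset.sum_add_distrib]

theorem pr_evA (hD : Measurable D) (hA : Measurable A) (hDbin : ∀ ω, D ω = 0 ∨ D ω = 1)
    (a : Fin K → ℕ) : Pr P (evA A a) = pmfDA P D A (0, a) + pmfDA P D A (1, a) := by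
  have hsplit : evA A a = evDA D A 0 a ∪ evDA D A 1 a := by
    ext ω
    rcases hDbin ω with h | h <;> simp [evA, evDA, h]
  have hdisj : Disjoint (evDA D A 0 a) (evDA D A 1 a) :=
    Set.disjoint_left.2 fun _ h0 h1 => zero_ne_one (h0.1.symm.trans h1.1)
  rw [hsplit, Pr, ← measureReal_def, measureReal_union hdisj (measurableSet_evDA hD hA 1 a)]
  rfl

theorem varD_eq (hD : Measurable D) (hA : Measurable A)
    (hDbin : ∀ ω, D ω = 0 ∨ D ω = 1) (hAsupp : ∀ ω, A ω ∈ 𝒜) :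
    varD P D = Pr P (evD D 1) * (1 - Pr P (evD D 1)) := by
  rw [varD_eq_wcov hD hA hDbin hAsupp, wcov, pr_evD_one_eq_wmean hD hA hDbin hAsupp]
  simp [wmean_supportDA]
  ring

theorem denomL_eq_wcov (hD : Measurable D) (hA : Measurable A)
    (hDbin : ∀ ω, D ω = 0 ∨ D ω = 1) (hAsupp : ∀ ω, A ω ∈ 𝒜) :
    denomL P D A = wcov (supportDA 𝒜) (pmfDA P D A) (fun x => (x.1 : ℝ)) (fun x => (x.1 : ℝ))
      - ∑ j, Mlong P D A j * wcov (supportDA 𝒜) (pmfDA P D A) (fun x => (x.1 : ℝ))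
          (fun x => (x.2 j : ℝ)) := by
  simp only [denomL, varD_eq_wcov hD hA hDbin hAsupp, covDA_eq_wcov hD hA hDbin hAsupp]

theorem Mlong_mul_wcov (hD : Measurable D) (hA : Measurable A)
    (hDbin : ∀ ω, D ω = 0 ∨ D ω = 1) (hAsupp : ∀ ω, A ω ∈ 𝒜) (hPD : (covDAmat P D A).PosDef)
    (l : Fin K) :
    ∑ j, Mlong P D A j * wcov (supportDA 𝒜) (pmfDA P D A) (fun x => (x.2 j : ℝ))
        (fun x => (x.2 l : ℝ))
      = wcov (supportDA 𝒜) (pmfDA P D A) (fun x => (x.1 : ℝ)) (fun x => (x.2 l : ℝ)) := by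
  simpa only [varAmat_eq_wcov hD hA hDbin hAsupp, covDA_eq_wcov hD hA hDbin hAsupp]
    using Mlong_mul_varAmat hPD l

theorem exp_residLong_mul_eq (hD : Measurable D) (hA : Measurable A)
    (hDbin : ∀ ω, D ω = 0 ∨ D ω = 1) (hAsupp : ∀ ω, A ω ∈ 𝒜)
    {Ypot : ℕ → (Fin K → ℕ) → Ω → ℝ}
    (hInt : ∀ d ∈ ({0, 1} : Finset ℕ), ∀ a ∈ 𝒜, Integrable (Ypot d a) P)
    (hIndep : ∀ d ∈ ({0, 1} : Finset ℕ), ∀ a ∈ 𝒜, IndepFun (fun ω => (D ω, A ω)) (Ypot d a) P)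
    (Δ θ₀ : ℝ) (θ : Fin K → ℝ) (h : ℕ × (Fin K → ℕ) → ℝ) :
    Exp P (fun ω => residLong D A 𝒜 Ypot Δ θ₀ θ ω * h (D ω, A ω))
      = wmean (supportDA 𝒜) (pmfDA P D A)
          (fun x => (muP P Ypot x.1 x.2 - Δ * x.1 - θ₀ - ∑ j, θ j * x.2 j) * h x) := by
  have := integral_sub_mul_comp_eq_sum_of_indepFun (P := P) (hD.prodMk hA)
    (mem_supportDA hDbin hAsupp) (Y := fun x => Ypot x.1 x.2)
    (fun x hx => hInt x.1 (Finset.mem_product.1 hx).1 x.2 (Finset.mem_product.1 hx).2)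
    (fun x hx => hIndep x.1 (Finset.mem_product.1 hx).1 x.2 (Finset.mem_product.1 hx).2)
    (fun x => Δ * x.1 + θ₀ + ∑ j, θ j * x.2 j) h
  simp only [Exp, residLong, Yobs_eq hDbin hAsupp, sub_sub] at this ⊢
  rw [this]
  exact Finset.sum_congr rfl fun x _ => by rw [pmfDA, evDA_eq_preimage]; rfl

def residD (P : Measure Ω) (D : Ω → ℕ) (A : Ω → Fin K → ℕ) (𝒜 : Finset (Fin K → ℕ)) :
    ℕ × (Fin K → ℕ) → ℝ :=
  partialOut (supportDA 𝒜) (pmfDA P D A) (fun x => (x.1 : ℝ)) (fun j x => (x.2 j : ℝ))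
    (Mlong P D A)

theorem residD_apply (hD : Measurable D) (hA : Measurable A)
    (hDbin : ∀ ω, D ω = 0 ∨ D ω = 1) (hAsupp : ∀ ω, A ω ∈ 𝒜) (d : ℕ) (a : Fin K → ℕ) :
    residD P D A 𝒜 (d, a) = d - Pr P (evD D 1)
      - ∑ j, Mlong P D A j * ((a j : ℝ) - Exp P (fun ω => (A ω j : ℝ))) := by
  have hEA : ∀ j, Exp P (fun ω => (A ω j : ℝ))
      = wmean (supportDA 𝒜) (pmfDA P D A) (fun x => (x.2 j : ℝ)) :=
    fun j => exp_comp_eq_wmean hD hA hDbin hAsupp (fun x => (x.2 j : ℝ))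
  simp only [residD, partialOut, hEA, pr_evD_one_eq_wmean hD hA hDbin hAsupp]

theorem wmean_treat_mul_residD (hD : Measurable D) (hA : Measurable A)
    (hDbin : ∀ ω, D ω = 0 ∨ D ω = 1) (hAsupp : ∀ ω, A ω ∈ 𝒜) :
    wmean (supportDA 𝒜) (pmfDA P D A) (fun x => (x.1 : ℝ) * residD P D A 𝒜 x)
      = denomL P D A := by
  rw [residD, wmean_mul_partialOut, denomL_eq_wcov hD hA hDbin hAsupp]

theorem wmean_residD (hD : Measurable D) (hA : Measurable A)
    (hDbin : ∀ ω, D ω = 0 ∨ D ω = 1) (hAsupp : ∀ ω, A ω ∈ 𝒜) :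
    wmean (supportDA 𝒜) (pmfDA P D A) (fun x => 1 * residD P D A 𝒜 x) = 0 := by
  rw [residD, wmean_mul_partialOut]
  simp [wcov_const_left _ _ (sum_pmfDA hD hA hDbin hAsupp)]

theorem wmean_mu_mul_residD (hD : Measurable D) (hA : Measurable A)
    (hDbin : ∀ ω, D ω = 0 ∨ D ω = 1) (hAsupp : ∀ ω, A ω ∈ 𝒜) (hPD : (covDAmat P D A).PosDef)
    {Ypot : ℕ → (Fin K → ℕ) → Ω → ℝ}
    (hInt : ∀ d ∈ ({0, 1} : Finset ℕ), ∀ a ∈ 𝒜, Integrable (Ypot d a) P)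
    (hIndep : ∀ d ∈ ({0, 1} : Finset ℕ), ∀ a ∈ 𝒜, IndepFun (fun ω => (D ω, A ω)) (Ypot d a) P)
    {Δ θ₀ : ℝ} {θ : Fin K → ℝ}
    (hO1 : Exp P (residLong D A 𝒜 Ypot Δ θ₀ θ) = 0)
    (hO2 : Exp P (fun ω => residLong D A 𝒜 Ypot Δ θ₀ θ ω * (D ω : ℝ)) = 0)
    (hO3 : ∀ j : Fin K, Exp P (fun ω => residLong D A 𝒜 Ypot Δ θ₀ θ ω * (A ω j : ℝ)) = 0) :
    wmean (supportDA 𝒜) (pmfDA P D A) (fun x => muP P Ypot x.1 x.2 * residD P D A 𝒜 x)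
      = Δ * denomL P D A := by
  have hmoment := exp_residLong_mul_eq (P := P) hD hA hDbin hAsupp hInt hIndep Δ θ₀ θ
  rw [residD, wmean_mul_partialOut_of_orthogonal _ _ (sum_pmfDA hD hA hDbin hAsupp) _ _ _ _
    (Mlong_mul_wcov hD hA hDbin hAsupp hPD) Δ θ₀ θ, denomL_eq_wcov hD hA hDbin hAsupp]
  · simpa [hO1] using (hmoment fun _ => 1).symm
  · exact (hmoment fun x => (x.1 : ℝ)).symm.trans hO2
  · exact fun j => (hmoment fun x => (x.2 j : ℝ)).symm.trans (hO3 j)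

theorem wdceL_eq (hD : Measurable D) (hA : Measurable A)
    (hDbin : ∀ ω, D ω = 0 ∨ D ω = 1) (hAsupp : ∀ ω, A ω ∈ 𝒜) (hp : Pr P (evD D 1) ≠ 0)
    (a : Fin K → ℕ) :
    wdceL P D A a = pmfDA P D A (1, a) * residD P D A 𝒜 (1, a) / denomL P D A := by
  rw [wdceL, piP, residD_apply hD hA hDbin hAsupp, varD_eq hD hA hDbin hAsupp, pmfDA]
  field_simp
  ring

theorem windL_eq (hD : Measurable D) (hA : Measurable A)
    (hDbin : ∀ ω, D ω = 0 ∨ D ω = 1) (hAsupp : ∀ ω, A ω ∈ 𝒜) (hp : Pr P (evD D 1) ≠ 0)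
    (hp' : 1 - Pr P (evD D 1) ≠ 0) (a : Fin K → ℕ) :
    windL P D A a = (pmfDA P D A (0, a) * residD P D A 𝒜 (0, a)
      + pmfDA P D A (1, a) * residD P D A 𝒜 (1, a)) / denomL P D A := by
  rw [windL, piP, piP, residD_apply hD hA hDbin hAsupp, residD_apply hD hA hDbin hAsupp,
    varD_eq hD hA hDbin hAsupp, pr_evD_zero hD hA hDbin hAsupp, pr_evA hD hA hDbin,
    pmfDA, pmfDA]
  field_simp
  ring

end Model

theorem long_regression_under_strong_exogeneity_general
    (P : Measure Ω) [IsProbabilityMeasure P]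
    (D : Ω → ℕ) (A : Ω → Fin K → ℕ) (𝒜 : Finset (Fin K → ℕ))
    (Ypot : ℕ → (Fin K → ℕ) → Ω → ℝ)
    (hD : Measurable D) (hA : Measurable A)
    (hDbin : ∀ ω, D ω = 0 ∨ D ω = 1)
    (hAsupp : ∀ ω, A ω ∈ 𝒜)
    (hInt : ∀ d ∈ ({0, 1} : Finset ℕ), ∀ a ∈ 𝒜, Integrable (Ypot d a) P)
    (hPD : (covDAmat P D A).PosDef)
    (hIndep : ∀ d ∈ ({0, 1} : Finset ℕ), ∀ a ∈ 𝒜,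
      IndepFun (fun ω => (D ω, A ω)) (Ypot d a) P)
    (Δlong θ₀ : ℝ) (θ : Fin K → ℝ)
    (hO1 : Exp P (residLong D A 𝒜 Ypot Δlong θ₀ θ) = 0)
    (hO2 : Exp P (fun ω => residLong D A 𝒜 Ypot Δlong θ₀ θ ω * (D ω : ℝ)) = 0)
    (hO3 : ∀ j : Fin K, Exp P (fun ω => residLong D A 𝒜 Ypot Δlong θ₀ θ ω * (A ω j : ℝ)) = 0)
    :
    Δlong
      = (∑ a ∈ 𝒜, wdceL P D A a * (muP P Ypot 1 a - muP P Ypot 0 a))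
        + (∑ a ∈ 𝒜, windL P D A a * (muP P Ypot 0 a - muP P Ypot 0 0))
    ∧ (∑ a ∈ 𝒜, wdceL P D A a) = 1
    ∧ (∑ a ∈ 𝒜, windL P D A a) = 0 := by
  have hvarD : 0 < varD P D := hPD.diag_pos (i := Sum.inl ())
  rw [varD_eq hD hA hDbin hAsupp] at hvarD
  have hp : Pr P (evD D 1) ≠ 0 := fun h => by simp [h] at hvarD
  have hp' : 1 - Pr P (evD D 1) ≠ 0 := fun h => by simp [h] at hvarD
  simp only [wdceL_eq hD hA hDbin hAsupp hp, windL_eq hD hA hDbin hAsupp hp hp']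
  exact dce_ind_decomposition (denomL_pos hPD).ne' (wmean_treat_mul_residD hD hA hDbin hAsupp)
    (wmean_residD hD hA hDbin hAsupp)
    (wmean_mu_mul_residD hD hA hDbin hAsupp hPD hInt hIndep hO1 hO2 hO3) _

/-- Theorem on the long regression under strong exogeneity:
Δ_long = Δ_dce^l + Δ_ind^l with weights summing to one and zero respectively. -/
theorem long_regression_under_strong_exogeneity
    (P : Measure Ω) [IsProbabilityMeasure P]
    (D : Ω → ℕ) (A : Ω → Fin K → ℕ) (𝒜 : Finset (Fin K → ℕ))
    (Ypot : ℕ → (Fin K → ℕ) → Ω → ℝ)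
    (hD : Measurable D) (hA : Measurable A)
    (hDbin : ∀ ω, D ω = 0 ∨ D ω = 1)
    (hAsupp : ∀ ω, A ω ∈ 𝒜) (h𝒜0 : (0 : Fin K → ℕ) ∈ 𝒜)
    (hInt : ∀ d ∈ ({0, 1} : Finset ℕ), ∀ a ∈ 𝒜, Integrable (Ypot d a) P)
    (hpos : ∀ d ∈ ({0, 1} : Finset ℕ), ∀ a ∈ 𝒜, 0 < Pr P (evDA D A d a))
    (hPD : (covDAmat P D A).PosDef)
    (hIndep : ∀ d ∈ ({0, 1} : Finset ℕ), ∀ a ∈ 𝒜,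
      IndepFun (fun ω => (D ω, A ω)) (Ypot d a) P)
    (Δlong θ₀ : ℝ) (θ : Fin K → ℝ)
    (hO1 : Exp P (residLong D A 𝒜 Ypot Δlong θ₀ θ) = 0)
    (hO2 : Exp P (fun ω => residLong D A 𝒜 Ypot Δlong θ₀ θ ω * (D ω : ℝ)) = 0)
    (hO3 : ∀ j : Fin K, Exp P (fun ω => residLong D A 𝒜 Ypot Δlong θ₀ θ ω * (A ω j : ℝ)) = 0)
    :
    Δlong
      = (∑ a ∈ 𝒜, wdceL P D A a * (muP P Ypot 1 a - muP P Ypot 0 a))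
        + (∑ a ∈ 𝒜, windL P D A a * (muP P Ypot 0 a - muP P Ypot 0 0))
    ∧ (∑ a ∈ 𝒜, wdceL P D A a) = 1
    ∧ (∑ a ∈ 𝒜, windL P D A a) = 0 :=
  long_regression_under_strong_exogeneity_general P D A 𝒜 Ypot hD hA hDbin hAsupp hInt hPD hIndep
    Δlong θ₀ θ hO1 hO2 hO3
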